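/- For 2 < k ≤ n, 1 ≤ m ≤ k, every permutation β ∈ S_{n+1}(T_k^m) satisfies β(1) ≤ m-1 or β(1) ≥ n+m-k+2. -/

import Mathlib

/-- An occurrence of the pattern `τ` in `α` at the strictly increasing
index sequence `f`: the subsequence `α ∘ f` is order-isomorphic to `τ`. -/
def PattOccursAt {k n : ℕ} (τ : Equiv.Perm (Fin k)) (α : Equiv.Perm (Fin n))
    (f : Fin k → Fin n) : Prop :=
  StrictMono f ∧ ∀ i j : Fin k, τ i < τ j ↔ α (f i) < α (f j)

/-- `α` contains the pattern `τ`. -/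
def Contains {k n : ℕ} (τ : Equiv.Perm (Fin k)) (α : Equiv.Perm (Fin n)) : Prop :=
  ∃ f, PattOccursAt τ α f

/-- `α` avoids the pattern `τ`. -/
def Avoids {k n : ℕ} (τ : Equiv.Perm (Fin k)) (α : Equiv.Perm (Fin n)) : Prop :=
  ¬ Contains τ α

/-- `α` contains the pattern `τ` exactly once. -/
def ContainsExactlyOnce {k n : ℕ} (τ : Equiv.Perm (Fin k)) (α : Equiv.Perm (Fin n)) : Prop :=
  ∃! f, PattOccursAt τ α f

/-- `T_k^m`: the permutations `σ` of length `k` with first entry `σ(1) = m`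
(one-based; in `Fin k` terms, `(σ 0) + 1 = m`). -/
def Tkm (k m : ℕ) : Set (Equiv.Perm (Fin k)) :=
  {σ | ∀ i : Fin k, (i : ℕ) = 0 → (σ i : ℕ) + 1 = m}

/-! If `m ≤ β(1) ≤ n + m - k + 1`, then `β(1)` is followed by at least `m - 1` smaller and at
least `k - m` larger entries. Together with `β(1)` these form a subsequence of length `k` whose
standardization starts with `m`, i.e. an occurrence of a pattern of `T_k^m`. -/

open Finset

namespace Equiv.Perm

variable {N : ℕ} (α : Perm (Fin N)) (c : Fin N)

lemma card_filter_apply_lt : #{x | α x < c} = c := by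
  rw [card_equiv α (t := {y | y < c}) (by simp), filter_gt_eq_Iio, Fin.card_Iio]

lemma card_filter_lt_apply : #{x | c < α x} = N - 1 - c := by
  rw [card_equiv α (t := {y | c < y}) (by simp), filter_lt_eq_Ioi, Fin.card_Ioi]

end Equiv.Perm

/-- The pattern is the inverse of the permutation sorting `α ∘ f`. -/
lemma exists_pattOccursAt {k N : ℕ} (α : Equiv.Perm (Fin N)) {f : Fin k → Fin N}
    (hf : StrictMono f) : ∃ τ, PattOccursAt τ α f := by
  set v : Fin k → Fin N := fun i => α (f i)
  have hv : Function.Injective v := α.injective.comp hf.injective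
  have hsorted : StrictMono (v ∘ Tuple.sort v) :=
    (Tuple.monotone_sort v).strictMono_of_injective (hv.comp (Tuple.sort v).injective)
  refine ⟨(Tuple.sort v)⁻¹, hf, fun i j => ?_⟩
  rw [← hsorted.lt_iff_lt]
  simp [v]

lemma PattOccursAt.val_eq_card_filter {k N : ℕ} {τ : Equiv.Perm (Fin k)}
    {α : Equiv.Perm (Fin N)} {f : Fin k → Fin N} (h : PattOccursAt τ α f) (i : Fin k) :
    (τ i : ℕ) = #{j | α (f j) < α (f i)} := by
  simp_rw [← τ.card_filter_apply_lt (τ i), h.2]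

lemma orderEmbOfFin_zero_of_zero_mem {N k : ℕ} {S : Finset (Fin (N + 1))} (hS : #S = k)
    (h0 : 0 ∈ S) (hk : 0 < k) : S.orderEmbOfFin hS ⟨0, hk⟩ = 0 := by
  rw [orderEmbOfFin_zero hS hk]
  exact le_antisymm (min'_le S 0 h0) (Fin.zero_le _)

lemma card_filter_orderEmbOfFin {β : Type*} [LinearOrder β] {k : ℕ} (S : Finset β) (hS : #S = k)
    (p : β → Prop) [DecidablePred p] : #{j | p (S.orderEmbOfFin hS j)} = #(S.filter p) := by
  conv_rhs => rw [← map_orderEmbOfFin_univ S hS, filter_map, card_map]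
  rfl

theorem Equiv.Perm.exists_contains_apply_zero {N a b k : ℕ} (α : Equiv.Perm (Fin (N + 1)))
    (hk : a + b + 1 = k) (ha : a ≤ α 0) (hb : b + α 0 ≤ N) :
    ∃ τ : Equiv.Perm (Fin k), Contains τ α ∧ (τ ⟨0, by omega⟩ : ℕ) = a := by
  obtain ⟨S₁, hS₁, hS₁card⟩ := exists_subset_card_eq (s := {y | α y < α 0}) (n := a)
    (by rw [α.card_filter_apply_lt]; exact ha)
  obtain ⟨S₂, hS₂, hS₂card⟩ := exists_subset_card_eq (s := {y | α 0 < α y}) (n := b)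
    (by rw [α.card_filter_lt_apply]; omega)
  have hlow : ∀ y ∈ S₁, α y < α 0 := fun y hy => (mem_filter.mp (hS₁ hy)).2
  have hhigh : ∀ y ∈ S₂, α 0 < α y := fun y hy => (mem_filter.mp (hS₂ hy)).2
  have h0 : 0 ∉ S₁ ∪ S₂ := by
    simp only [mem_union, not_or]
    exact ⟨fun h => (hlow 0 h).false, fun h => (hhigh 0 h).false⟩
  set S := insert 0 (S₁ ∪ S₂)
  have hS : #S = k := by
    rw [card_insert_of_notMem h0, card_union_of_disjoint
      (disjoint_left.mpr fun y h₁ h₂ => (hlow y h₁).asymm (hhigh y h₂)), hS₁card, hS₂card, hk]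
  have hSlow : S.filter (fun y => α y < α 0) = S₁ := by
    ext y
    simp only [S, mem_filter, mem_insert, mem_union]
    constructor
    · rintro ⟨rfl | h₁ | h₂, hy⟩
      · exact absurd hy (lt_irrefl _)
      · exact h₁
      · exact absurd hy (hhigh y h₂).asymm
    · exact fun h₁ => ⟨Or.inr (Or.inl h₁), hlow y h₁⟩
  set g := S.orderEmbOfFin hS
  obtain ⟨τ, hτ⟩ := exists_pattOccursAt α g.strictMono
  refine ⟨τ, ⟨g, hτ⟩, ?_⟩
  rw [hτ.val_eq_card_filter, orderEmbOfFin_zero_of_zero_mem hS (mem_insert_self 0 _),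
    card_filter_orderEmbOfFin S hS (fun y => α y < α 0), hSlow, hS₁card]

theorem stmt17 (k m n : ℕ) (hkn : k ≤ n) (hm1 : 1 ≤ m) (hmk : m ≤ k)
    (β : Equiv.Perm (Fin (n + 1))) (hβ : ∀ τ ∈ Tkm k m, Avoids τ β) :
    (β ⟨0, by omega⟩ : ℕ) + 1 ≤ m - 1 ∨ n + m - k + 2 ≤ (β ⟨0, by omega⟩ : ℕ) + 1 := by
  change (β 0 : ℕ) + 1 ≤ m - 1 ∨ n + m - k + 2 ≤ (β 0 : ℕ) + 1
  by_contra! hmiddle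
  obtain ⟨τ, hτ, hτ0⟩ :=
    β.exists_contains_apply_zero (a := m - 1) (b := k - m) (k := k) (by omega) (by omega) (by omega)
  refine hβ τ (fun i hi => ?_) hτ
  rw [show i = ⟨0, by omega⟩ from Fin.ext hi, hτ0]
  omega
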